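/- Under the hypotheses: a, b, e, f, p ∈ ℚ, √p ∉ ℚ, and either (a) a - b√p > 0, a + b√p > 0, e > 0, |f|/e > |b|/a, or (b) a - b√p < 0, a + b√p > 0, f > 0, |e|/f > |a|/b, the quantity D/4 := (a² - pb²)(e² - f²a²/b²) is strictly negative. -/

import Mathlib

/-!
Both factors are read off the hypotheses. Since `p = (√p)²`, the first factor is the product of
the conjugates `(a - b√p)(a + b√p)`, so its sign is fixed by the two sign conditions on them.
Cross-multiplying the inequality between `|f|/e` and `|b|/a` (resp. `|e|/f` and `|a|/b`) and
squaring compares `e²b²` with `f²a²`, which fixes the sign of the second factor, opposite to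
that of the first.
-/

open Real

lemma sub_mul_sqrt_mul_add_mul_sqrt {p : ℝ} (hp : 0 ≤ p) (a b : ℝ) :
    (a - b * √p) * (a + b * √p) = a ^ 2 - p * b ^ 2 := by
  linear_combination (-b ^ 2) * sq_sqrt hp

lemma sq_mul_lt_sq_mul_of_abs_div_lt {K : Type*} [Field K] [LinearOrder K] [IsStrictOrderedRing K]
    {u v x y : K} (hx : 0 < x) (hy : 0 < y) (h : |u| / x < |v| / y) :
    (u * y) ^ 2 < (v * x) ^ 2 := by
  rw [div_lt_div_iff₀ hx hy] at h
  exact sq_lt_sq.2 (by rwa [abs_mul, abs_mul, abs_of_pos hx, abs_of_pos hy])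

theorem quarter_discriminant_neg_general
    (a b e f p : ℚ) (hp : 0 < p) (hb : b ≠ 0)
    (hcase :
      ((a : ℝ) - (b : ℝ) * Real.sqrt p > 0 ∧ (a : ℝ) + (b : ℝ) * Real.sqrt p > 0
        ∧ 0 < e ∧ |f| / e > |b| / a) ∨
      ((a : ℝ) - (b : ℝ) * Real.sqrt p < 0 ∧ (a : ℝ) + (b : ℝ) * Real.sqrt p > 0
        ∧ 0 < f ∧ |e| / f > |a| / b)) :
    (a ^ 2 - p * b ^ 2) * (e ^ 2 - f ^ 2 * a ^ 2 / b ^ 2) < 0 := by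
  have hb2 : 0 < b ^ 2 := by positivity
  have hconj : ((a ^ 2 - p * b ^ 2 : ℚ) : ℝ) = (a - b * √p) * (a + b * √p) := by
    push_cast
    exact (sub_mul_sqrt_mul_add_mul_sqrt (by exact_mod_cast hp.le) _ _).symm
  rcases hcase with ⟨h₁, h₂, he, hfe⟩ | ⟨h₁, h₂, hf, hef⟩
  · have ha : 0 < a := by exact_mod_cast (by linarith : (0 : ℝ) < a)
    have hcross := sq_mul_lt_sq_mul_of_abs_div_lt ha he hfe
    refine mul_neg_of_pos_of_neg ?_ ?_
    · exact_mod_cast hconj ▸ mul_pos h₁ h₂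
    · rw [sub_neg, lt_div_iff₀ hb2]
      linarith
  · have hbsqrt : (0 : ℝ) < b * √p := by linarith
    have hb' : 0 < b := by exact_mod_cast pos_of_mul_pos_left hbsqrt (sqrt_nonneg _)
    have hcross := sq_mul_lt_sq_mul_of_abs_div_lt hb' hf hef
    refine mul_neg_of_neg_of_pos ?_ ?_
    · exact_mod_cast hconj ▸ mul_neg_of_neg_of_pos h₁ h₂
    · rw [sub_pos, div_lt_iff₀ hb2]
      linarith

/-- Under condition (a) or (b), the quarter-discriminant
(a² - pb²)(e² - f²a²/b²) is strictly negative. -/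
theorem quarter_discriminant_neg
    (a b e f p : ℚ) (hp : 0 < p) (hirr : Irrational (Real.sqrt p)) (hb : b ≠ 0)
    (hcase :
      ((a : ℝ) - (b : ℝ) * Real.sqrt p > 0 ∧ (a : ℝ) + (b : ℝ) * Real.sqrt p > 0
        ∧ 0 < e ∧ |f| / e > |b| / a) ∨
      ((a : ℝ) - (b : ℝ) * Real.sqrt p < 0 ∧ (a : ℝ) + (b : ℝ) * Real.sqrt p > 0
        ∧ 0 < f ∧ |e| / f > |a| / b)) :
    (a ^ 2 - p * b ^ 2) * (e ^ 2 - f ^ 2 * a ^ 2 / b ^ 2) < 0 :=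
  quarter_discriminant_neg_general a b e f p hp hb hcase
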